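/- Let b₀, b₁ > 0, b₂, b₃ < 0 with b₀ + b₁ + b₂ + b₃ = 0 and b₀ + b₃ ≤ 0, and ζ₀, ζ₁ ∈ [0,1]. Define μ_η(λ) piecewise by μ_η(λ) = (ζ₀(b₁ + b₂ + λ) - ζ₁ b₁)/(b₂ + λ) for λ ∈ [b₃, b₀ + b₃], μ_η(λ) = ζ₁ for λ ∈ [b₀ + b₃, 0], and μ_η(λ) = (ζ₀ b₀ - ζ₁(b₀ + b₃ - λ))/(λ - b₃) for λ ∈ (0, -b₂]. Then μ_η(λ) ∈ [0,1] for all λ in its domain, and μ_η is continuous on [b₃, -b₂] \ {0}, with a jump at λ = 0 unless ζ₀ b₀ = ζ₁ b₀. -/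

import Mathlib

/-!
Mass conservation `-b₂ = b₀ + b₁ + b₃` turns both rational branches into weighted averages
of `ζ₀` and `ζ₁` with nonnegative weights:
on `[b₃, b₀ + b₃]` the weights are `b₀ + b₃ - λ` and `b₁`, on `(0, -b₂]` they are `b₀` and
`λ - (b₀ + b₃)`. Hence the curve stays in `[0,1]`, and the left branch reaches `ζ₁` at the
breakpoint `b₀ + b₃`, so the curve is continuous on `(-∞, 0)`. At `0⁺` the right branch tends
to `(ζ₀ b₀ - ζ₁ (b₀ + b₃)) / (-b₃)`, which equals the value `ζ₁` at `0` iff `ζ₀ b₀ = ζ₁ b₀`.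
-/

open Set Filter Topology

theorem Convex.mul_add_mul_div_mem {s : Set ℝ} (hs : Convex ℝ s) {x y a c : ℝ} (hx : x ∈ s)
    (hy : y ∈ s) (ha : 0 ≤ a) (hc : 0 ≤ c) (hac : 0 < a + c) :
    (a * x + c * y) / (a + c) ∈ s := by
  convert convex_iff_div.mp hs hx hy ha hc hac using 1
  simp only [smul_eq_mul]
  ring

namespace SingleCycleNetwork

variable (b0 b1 b2 b3 ζ0 ζ1 : ℝ)

noncomputable def lowerBranch (lam : ℝ) : ℝ := (ζ0 * (b1 + b2 + lam) - ζ1 * b1) / (b2 + lam)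

noncomputable def upperBranch (lam : ℝ) : ℝ := (ζ0 * b0 - ζ1 * (b0 + b3 - lam)) / (lam - b3)

noncomputable def rootCurve (lam : ℝ) : ℝ :=
  if lam ≤ b0 + b3 then lowerBranch b1 b2 ζ0 ζ1 lam
  else if lam ≤ 0 then ζ1
  else upperBranch b0 b3 ζ0 ζ1 lam

variable {b0 b1 b2 b3 ζ0 ζ1}

theorem lowerBranch_eq_average (hsum : b0 + b1 + b2 + b3 = 0) (lam : ℝ) :
    lowerBranch b1 b2 ζ0 ζ1 lam
      = ((b0 + b3 - lam) * ζ0 + b1 * ζ1) / ((b0 + b3 - lam) + b1) := by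
  obtain rfl : b2 = -(b0 + b1 + b3) := by linarith
  rw [lowerBranch, ← neg_div_neg_eq]
  ring_nf

theorem upperBranch_eq_average (lam : ℝ) :
    upperBranch b0 b3 ζ0 ζ1 lam
      = (b0 * ζ0 + (lam - (b0 + b3)) * ζ1) / (b0 + (lam - (b0 + b3))) := by
  rw [upperBranch]
  ring_nf

theorem lowerBranch_mem_Icc (hb1 : 0 < b1) (hsum : b0 + b1 + b2 + b3 = 0)
    (hζ0 : ζ0 ∈ Icc (0 : ℝ) 1) (hζ1 : ζ1 ∈ Icc (0 : ℝ) 1) {lam : ℝ} (hlam : lam ≤ b0 + b3) :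
    lowerBranch b1 b2 ζ0 ζ1 lam ∈ Icc (0 : ℝ) 1 := by
  rw [lowerBranch_eq_average hsum]
  exact (convex_Icc 0 1).mul_add_mul_div_mem hζ0 hζ1 (by linarith) hb1.le (by linarith)

theorem upperBranch_mem_Icc (hb0 : 0 < b0) (hζ0 : ζ0 ∈ Icc (0 : ℝ) 1)
    (hζ1 : ζ1 ∈ Icc (0 : ℝ) 1) {lam : ℝ} (hlam : b0 + b3 ≤ lam) :
    upperBranch b0 b3 ζ0 ζ1 lam ∈ Icc (0 : ℝ) 1 := by
  rw [upperBranch_eq_average]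
  exact (convex_Icc 0 1).mul_add_mul_div_mem hζ0 hζ1 hb0.le (by linarith) (by linarith)

theorem lowerBranch_breakpoint (hb1 : 0 < b1) (hsum : b0 + b1 + b2 + b3 = 0) :
    lowerBranch b1 b2 ζ0 ζ1 (b0 + b3) = ζ1 := by
  rw [lowerBranch_eq_average hsum, sub_self, zero_mul, zero_add, zero_add,
    mul_div_cancel_left₀ _ hb1.ne']

theorem upperBranch_zero_eq_iff (hb3 : b3 ≠ 0) :
    upperBranch b0 b3 ζ0 ζ1 0 = ζ1 ↔ ζ0 * b0 = ζ1 * b0 := by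
  rw [upperBranch, div_eq_iff (by simpa using hb3)]
  constructor <;> intro h <;> linarith

theorem continuousOn_lowerBranch (hb1 : 0 < b1) (hsum : b0 + b1 + b2 + b3 = 0) :
    ContinuousOn (lowerBranch b1 b2 ζ0 ζ1) (Iic (b0 + b3)) :=
  fun _ hlam ↦ (ContinuousAt.div (by fun_prop) (by fun_prop)
    (by simp only [mem_Iic] at hlam; linarith)).continuousWithinAt

theorem continuousOn_upperBranch : ContinuousOn (upperBranch b0 b3 ζ0 ζ1) (Ioi b3) :=
  fun _ hlam ↦ (ContinuousAt.div (by fun_prop) (by fun_prop)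
    (sub_ne_zero.mpr (ne_of_gt hlam))).continuousWithinAt

theorem rootCurve_mem_Icc (hb0 : 0 < b0) (hb1 : 0 < b1) (hsum : b0 + b1 + b2 + b3 = 0)
    (hζ0 : ζ0 ∈ Icc (0 : ℝ) 1) (hζ1 : ζ1 ∈ Icc (0 : ℝ) 1) (lam : ℝ) :
    rootCurve b0 b1 b2 b3 ζ0 ζ1 lam ∈ Icc (0 : ℝ) 1 := by
  unfold rootCurve
  split_ifs with hlow hmid
  · exact lowerBranch_mem_Icc hb1 hsum hζ0 hζ1 hlow
  · exact hζ1
  · exact upperBranch_mem_Icc hb0 hζ0 hζ1 (by linarith)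

theorem rootCurve_zero (hb1 : 0 < b1) (hsum : b0 + b1 + b2 + b3 = 0) (hb03 : b0 + b3 ≤ 0) :
    rootCurve b0 b1 b2 b3 ζ0 ζ1 0 = ζ1 := by
  by_cases hlow : (0 : ℝ) ≤ b0 + b3
  · rw [rootCurve, if_pos hlow, show (0 : ℝ) = b0 + b3 by linarith,
      lowerBranch_breakpoint hb1 hsum]
  · rw [rootCurve, if_neg hlow, if_pos le_rfl]

theorem rootCurve_eqOn_Ioi (hb03 : b0 + b3 ≤ 0) :
    EqOn (rootCurve b0 b1 b2 b3 ζ0 ζ1) (upperBranch b0 b3 ζ0 ζ1) (Ioi 0) := fun lam hlam ↦ by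
  simp only [mem_Ioi] at hlam
  simp only [rootCurve, if_neg (show ¬lam ≤ b0 + b3 by linarith), if_neg hlam.not_ge]

theorem continuousOn_rootCurve_Iio (hb1 : 0 < b1) (hsum : b0 + b1 + b2 + b3 = 0) :
    ContinuousOn (rootCurve b0 b1 b2 b3 ζ0 ζ1) (Iio 0) := by
  have hglued : Continuous fun lam ↦
      if lam ≤ b0 + b3 then lowerBranch b1 b2 ζ0 ζ1 lam else ζ1 :=
    continuous_if_le continuous_id continuous_const (continuousOn_lowerBranch hb1 hsum)
      continuousOn_const fun lam hlam ↦ hlam ▸ lowerBranch_breakpoint hb1 hsum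
  refine hglued.continuousOn.congr fun lam hlam ↦ ?_
  simp only [rootCurve, if_pos (le_of_lt (mem_Iio.mp hlam))]

theorem continuousOn_rootCurve_compl_zero (hb1 : 0 < b1) (hb3 : b3 < 0)
    (hsum : b0 + b1 + b2 + b3 = 0) (hb03 : b0 + b3 ≤ 0) :
    ContinuousOn (rootCurve b0 b1 b2 b3 ζ0 ζ1) {0}ᶜ := by
  rw [← Iio_union_Ioi]
  refine (continuousOn_rootCurve_Iio hb1 hsum).union_of_isOpen ?_ isOpen_Iio isOpen_Ioi
  exact (continuousOn_upperBranch.mono (Ioi_subset_Ioi hb3.le)).congr (rootCurve_eqOn_Ioi hb03)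

theorem not_continuousWithinAt_rootCurve (hb1 : 0 < b1) (hb2 : b2 < 0) (hb3 : b3 < 0)
    (hsum : b0 + b1 + b2 + b3 = 0) (hb03 : b0 + b3 ≤ 0) (hjump : ζ0 * b0 ≠ ζ1 * b0) :
    ¬ContinuousWithinAt (rootCurve b0 b1 b2 b3 ζ0 ζ1) (Icc b3 (-b2)) 0 := by
  intro hcont
  have hright : 𝓝[>] (0 : ℝ) ≤ 𝓝[Icc b3 (-b2)] 0 :=
    nhdsWithin_le_of_mem (mem_of_superset (Ioc_mem_nhdsGT (by linarith))
      (Ioc_subset_Icc_self.trans (Icc_subset_Icc_left hb3.le)))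
  have hlim_value : Tendsto (rootCurve b0 b1 b2 b3 ζ0 ζ1) (𝓝[>] 0) (𝓝 ζ1) := by
    simpa only [rootCurve_zero hb1 hsum hb03] using hcont.mono_left hright
  have hlim_branch : Tendsto (rootCurve b0 b1 b2 b3 ζ0 ζ1) (𝓝[>] 0)
      (𝓝 (upperBranch b0 b3 ζ0 ζ1 0)) :=
    ((continuousOn_upperBranch.continuousAt (Ioi_mem_nhds hb3)).mono_left
      nhdsWithin_le_nhds).congr' (eventuallyEq_nhdsWithin_of_eqOn (rootCurve_eqOn_Ioi hb03)).symm
  exact hjump ((upperBranch_zero_eq_iff hb3.ne).mp (tendsto_nhds_unique hlim_branch hlim_value))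

end SingleCycleNetwork

open SingleCycleNetwork in
/-- The explicit piecewise root curve `μ_η` of the composition-gap function for the
single-cycle example network takes values in `[0,1]`, is continuous away from `λ = 0`,
and jumps at `λ = 0` unless `ζ₀ b₀ = ζ₁ b₀`. -/
theorem stmt18 (b0 b1 b2 b3 zeta0 zeta1 : ℝ)
    (hb0 : 0 < b0) (hb1 : 0 < b1) (hb2 : b2 < 0) (hb3 : b3 < 0)
    (hsum : b0 + b1 + b2 + b3 = 0) (hb03 : b0 + b3 ≤ 0)
    (hzeta0 : zeta0 ∈ Set.Icc (0 : ℝ) 1) (hzeta1 : zeta1 ∈ Set.Icc (0 : ℝ) 1) :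
    (∀ lam ∈ Set.Icc b3 (-b2),
      (if lam ≤ b0 + b3 then (zeta0 * (b1 + b2 + lam) - zeta1 * b1) / (b2 + lam)
        else if lam ≤ 0 then zeta1
        else (zeta0 * b0 - zeta1 * (b0 + b3 - lam)) / (lam - b3)) ∈ Set.Icc (0 : ℝ) 1) ∧
    ContinuousOn (fun lam : ℝ =>
      if lam ≤ b0 + b3 then (zeta0 * (b1 + b2 + lam) - zeta1 * b1) / (b2 + lam)
        else if lam ≤ 0 then zeta1
        else (zeta0 * b0 - zeta1 * (b0 + b3 - lam)) / (lam - b3))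
      (Set.Icc b3 (-b2) \ {0}) ∧
    (zeta0 * b0 ≠ zeta1 * b0 →
      ¬ContinuousWithinAt (fun lam : ℝ =>
        if lam ≤ b0 + b3 then (zeta0 * (b1 + b2 + lam) - zeta1 * b1) / (b2 + lam)
          else if lam ≤ 0 then zeta1
          else (zeta0 * b0 - zeta1 * (b0 + b3 - lam)) / (lam - b3))
        (Set.Icc b3 (-b2)) 0) :=
  ⟨fun lam _ ↦ rootCurve_mem_Icc hb0 hb1 hsum hzeta0 hzeta1 lam,
    (continuousOn_rootCurve_compl_zero hb1 hb3 hsum hb03).mono (sdiff_subset_compl _ _),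
    not_continuousWithinAt_rootCurve hb1 hb2 hb3 hsum hb03⟩
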